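/- Let N ≥ 1 and let n be an integer such that N does not divide n. Set θ_j := π n (j−1)/(2N) for j = 1,…,N (the twist-state angles). Then for every j ∈ {1,…,N}: (i) ∑_{k=1}^N sin(4(θ_k − θ_j)) = 0, and (ii) ∑_{k=1}^N sin^2(2(θ_k − θ_j)) = N/2. Consequently, for any constant α, in the twist configuration with Δλ_j = α for all j, the eigenangle equation dθ_j/dt = (1/4)∑_k (Δλ_k)^2 sin(4(θ_k − θ_j)) has vanishing right-hand side, and the eigenvalue-difference equation reduces to dα/dt = −(N/2) α^3. -/

import Mathlib

open BigOperators Real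

/-- The twist-state eigenframe angles `θ_j = π n (j−1) / (2N)` (here `j : Fin N`,
so `(j : ℕ)` plays the role of `j − 1`). -/
noncomputable def twistAngle (N : ℕ) (n : ℤ) (j : Fin N) : ℝ :=
  Real.pi * (n : ℝ) * ((j : ℕ) : ℝ) / (2 * N)

lemma twist_sum_exp (N : ℕ) (hN : 1 ≤ N) (n : ℤ) (hn : ¬ ((N : ℤ) ∣ n)) (c : ℝ) :
    ∑ k : Fin N, Complex.exp (((2 * Real.pi * (n : ℝ) * (k : ℕ) / N - c : ℝ)) * Complex.I)
      = 0 := by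
  have hN0 : (N : ℝ) ≠ 0 := by positivity
  set z : ℂ := Complex.exp (((2 * Real.pi * (n : ℝ) / N : ℝ)) * Complex.I) with hz
  have hzpow : ∀ k : ℕ, z ^ k = Complex.exp (((2 * Real.pi * (n : ℝ) * k / N : ℝ)) * Complex.I) := by
    intro k
    rw [hz, ← Complex.exp_nat_mul]
    congr 1
    push_cast
    ring
  have hNc : (N : ℂ) ≠ 0 := by exact_mod_cast (by positivity : (N:ℝ) ≠ 0)
  have hz1 : z ≠ 1 := by
    intro h
    rw [hz, Complex.exp_eq_one_iff] at h
    obtain ⟨m, hm⟩ := h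
    apply hn
    refine ⟨m, ?_⟩
    have hI : (2 * (Real.pi : ℂ) * Complex.I) ≠ 0 := by
      simp [Complex.I_ne_zero, Real.pi_ne_zero]
    push_cast at hm
    field_simp at hm
    have h2 : (n : ℂ) * (2 * (Real.pi : ℂ) * Complex.I)
        = ((m : ℂ) * N) * (2 * (Real.pi : ℂ) * Complex.I) := by linear_combination (2 * (Real.pi : ℂ) * Complex.I) * hm
    have h3 : (n : ℂ) = (m : ℂ) * N := mul_right_cancel₀ hI h2
    have h4 : (n : ℤ) = m * N := by exact_mod_cast h3
    rw [h4]; ring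
  have hzN : z ^ N = 1 := by
    rw [hz, ← Complex.exp_nat_mul]
    have : (N : ℂ) * (((2 * Real.pi * (n : ℝ) / N : ℝ)) * Complex.I)
        = (n : ℂ) * (2 * Real.pi * Complex.I) := by
      push_cast
      field_simp
    rw [this, Complex.exp_int_mul_two_pi_mul_I]
  have hsum : ∑ k ∈ Finset.range N, z ^ k = 0 := by
    rw [geom_sum_eq hz1, hzN]
    simp
  calc ∑ k : Fin N, Complex.exp (((2 * Real.pi * (n : ℝ) * (k : ℕ) / N - c : ℝ)) * Complex.I)
      = ∑ k : Fin N, Complex.exp ((-c : ℝ) * Complex.I) * z ^ (k : ℕ) := by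
        refine Finset.sum_congr rfl fun k _ => ?_
        rw [hzpow, ← Complex.exp_add]
        congr 1
        push_cast
        ring
    _ = Complex.exp ((-c : ℝ) * Complex.I) * ∑ k ∈ Finset.range N, z ^ k := by
        rw [← Finset.mul_sum, Fin.sum_univ_eq_sum_range (fun k => z ^ k)]
    _ = 0 := by rw [hsum, mul_zero]

lemma twist_sum_sin (N : ℕ) (hN : 1 ≤ N) (n : ℤ) (hn : ¬ ((N : ℤ) ∣ n)) (c : ℝ) :
    ∑ k : Fin N, Real.sin (2 * Real.pi * (n : ℝ) * (k : ℕ) / N - c) = 0 := by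
  have h := twist_sum_exp N hN n hn c
  have h2 : ∑ k : Fin N, Real.sin (2 * Real.pi * (n : ℝ) * (k : ℕ) / N - c)
      = (∑ k : Fin N, Complex.exp (((2 * Real.pi * (n : ℝ) * (k : ℕ) / N - c : ℝ)) * Complex.I)).im := by
    rw [Complex.im_sum]
    exact Finset.sum_congr rfl fun k _ => (Complex.exp_ofReal_mul_I_im _).symm
  rw [h2, h, Complex.zero_im]

lemma twist_sum_cos (N : ℕ) (hN : 1 ≤ N) (n : ℤ) (hn : ¬ ((N : ℤ) ∣ n)) (c : ℝ) :
    ∑ k : Fin N, Real.cos (2 * Real.pi * (n : ℝ) * (k : ℕ) / N - c) = 0 := by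
  have h := twist_sum_exp N hN n hn c
  have h2 : ∑ k : Fin N, Real.cos (2 * Real.pi * (n : ℝ) * (k : ℕ) / N - c)
      = (∑ k : Fin N, Complex.exp (((2 * Real.pi * (n : ℝ) * (k : ℕ) / N - c : ℝ)) * Complex.I)).re := by
    rw [Complex.re_sum]
    exact Finset.sum_congr rfl fun k _ => (Complex.exp_ofReal_mul_I_re _).symm
  rw [h2, h, Complex.zero_re]

/-- for the twist-state angles with winding number `n` not divisible by `N`:
(i) `∑_k sin(4(θ_k − θ_j)) = 0`, (ii) `∑_k sin²(2(θ_k − θ_j)) = N/2`; consequently, with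
constant eigenvalue differences `Δλ_j = α` the eigenangle equation has vanishing right-hand
side and the eigenvalue-difference equation reduces to `dα/dt = −(N/2)α³`. -/
theorem twist_state_trig_sums
    (N : ℕ) (hN : 1 ≤ N) (n : ℤ) (hn : ¬ ((N : ℤ) ∣ n)) :
    ∀ j : Fin N,
      (∑ k : Fin N, Real.sin (4 * (twistAngle N n k - twistAngle N n j)) = 0)
      ∧ (∑ k : Fin N, Real.sin (2 * (twistAngle N n k - twistAngle N n j)) ^ 2
          = (N : ℝ) / 2)
      ∧ (∀ α : ℝ,
          (1 / 4 : ℝ) * ∑ k : Fin N,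
            α ^ 2 * Real.sin (4 * (twistAngle N n k - twistAngle N n j)) = 0)
      ∧ (∀ α : ℝ,
          -α * ∑ k : Fin N,
            α ^ 2 * Real.sin (2 * (twistAngle N n k - twistAngle N n j)) ^ 2
          = -((N : ℝ) / 2) * α ^ 3) := by
  intro j
  have hN0 : (N : ℝ) ≠ 0 := by positivity
  have hangle : ∀ k : Fin N, 4 * (twistAngle N n k - twistAngle N n j)
      = 2 * Real.pi * (n : ℝ) * (k : ℕ) / N - 2 * Real.pi * (n : ℝ) * (j : ℕ) / N := by
    intro k
    unfold twistAngle
    field_simp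
    ring
  have h1 : ∑ k : Fin N, Real.sin (4 * (twistAngle N n k - twistAngle N n j)) = 0 := by
    simp_rw [hangle]
    exact twist_sum_sin N hN n hn _
  have h2 : ∑ k : Fin N, Real.sin (2 * (twistAngle N n k - twistAngle N n j)) ^ 2
      = (N : ℝ) / 2 := by
    have hcos : ∑ k : Fin N, Real.cos (4 * (twistAngle N n k - twistAngle N n j)) = 0 := by
      simp_rw [hangle]
      exact twist_sum_cos N hN n hn _
    have hsq : ∀ k : Fin N, Real.sin (2 * (twistAngle N n k - twistAngle N n j)) ^ 2
        = 1 / 2 - Real.cos (4 * (twistAngle N n k - twistAngle N n j)) / 2 := by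
      intro k
      rw [Real.sin_sq_eq_half_sub]
      congr 2
      ring
    simp_rw [hsq]
    rw [Finset.sum_sub_distrib, Finset.sum_const, ← Finset.sum_div, hcos]
    simp
    ring_nf
  refine ⟨h1, h2, ?_, ?_⟩
  · intro α
    simp_rw [← Finset.mul_sum, h1]
    ring
  · intro α
    simp_rw [← Finset.mul_sum, h2]
    ring
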